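/- arXiv:2309.03142 — 2 statements merged into one kernel-verified Lean document; each statement's English description precedes it below -/
import Mathlib

section
/- With ψ as above (homeomorphism invariant, finitely additive, and ψ((0,1] × (0,1)^n) = 0 for all n ≥ 0), one has ψ(ℝ^n) = (-1)^n · ψ({pt}) for every n ≥ 0, where ψ(ℝ^n) means ψ evaluated on any set homeomorphic to ℝ^n. -/
/-!
The set `(0,1] × (0,1)ⁿ` is the disjoint union of the open cube `(0,1)ⁿ⁺¹ ≅ ℝⁿ⁺¹` and the face
`{1} × (0,1)ⁿ ≅ ℝⁿ`, so additivity and the vanishing of `ψ` on it give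
`ψ(ℝⁿ⁺¹) = -ψ(ℝⁿ)`; induction on `n` starting from `ℝ⁰ = {pt}` finishes the proof.
-/

open Set

def Homeomorph.subtypePiEquivPi {ι : Type*} {X : ι → Type*} [∀ i, TopologicalSpace (X i)]
    {p : ∀ i, X i → Prop} : {f : ∀ i, X i // ∀ i, p i (f i)} ≃ₜ ∀ i, {x // p i x} where
  toEquiv := Equiv.subtypePiEquivPi
  continuous_toFun := continuous_pi fun i =>
    ((continuous_apply i).comp continuous_subtype_val).subtype_mk _
  continuous_invFun := (continuous_pi fun i =>
    continuous_subtype_val.comp (continuous_apply i)).subtype_mk _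

theorem nonempty_homeomorph_Ioo_zero_one : Nonempty (Ioo (0 : ℝ) 1 ≃ₜ ℝ) := by
  let e : ℝ ≃o ℝ := (OrderIso.mulLeft₀ 2 two_pos).trans (OrderIso.addRight (-1))
  have he : Ioo (0 : ℝ) 1 = e ⁻¹' Ioo (-1) 1 := by
    ext x
    simp only [mem_Ioo, mem_preimage, e, OrderIso.trans_apply, OrderIso.mulLeft₀_apply,
      OrderIso.addRight_apply]
    constructor <;> rintro ⟨h₀, h₁⟩ <;> constructor <;> linarith
  exact ⟨(e.toHomeomorph.sets he).trans (orderIsoIooNegOneOne ℝ).toHomeomorph.symm⟩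

section Prism

variable {ι X : Type*}

def prism (i₀ : ι) (s t : Set X) : Set (ι → X) := {x | x i₀ ∈ s ∧ ∀ i, i ≠ i₀ → x i ∈ t}

theorem prism_union (i₀ : ι) (s s' t : Set X) :
    prism i₀ (s ∪ s') t = prism i₀ s t ∪ prism i₀ s' t := by
  ext x
  simp only [prism, mem_union, mem_ofPred_eq, or_and_right]

theorem disjoint_prism {s s' : Set X} (h : Disjoint s s') (i₀ : ι) (t : Set X) :
    Disjoint (prism i₀ s t) (prism i₀ s' t) :=
  disjoint_left.2 fun _ hx hx' => disjoint_left.1 h hx.1 hx'.1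

variable [TopologicalSpace X] [DecidableEq ι]

theorem nonempty_homeomorph_prism (i₀ : ι) (s t : Set X) :
    Nonempty (prism i₀ s t ≃ₜ s × ({i // i ≠ i₀} → t)) := by
  have h : prism i₀ s t = Homeomorph.funSplitAt X i₀ ⁻¹' (s ×ˢ {f | ∀ i, f i ∈ t}) := by
    ext x
    simp [prism]
  exact ⟨((Homeomorph.funSplitAt X i₀).sets h).trans <| (Homeomorph.Set.prod _ _).trans <|
    (Homeomorph.refl s).prodCongr Homeomorph.subtypePiEquivPi⟩

variable {Y : Type*} [TopologicalSpace Y]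

theorem nonempty_homeomorph_prism_self (i₀ : ι) {t : Set X} (h : Nonempty (t ≃ₜ Y)) :
    Nonempty (prism i₀ t t ≃ₜ (ι → Y)) := by
  obtain ⟨e⟩ := nonempty_homeomorph_prism i₀ t t
  obtain ⟨f⟩ := h
  exact ⟨e.trans <| (f.prodCongr (Homeomorph.piCongrRight fun _ => f)).trans
    (Homeomorph.funSplitAt Y i₀).symm⟩

theorem nonempty_homeomorph_prism_singleton (i₀ : ι) (a : X) {t : Set X}
    (h : Nonempty (t ≃ₜ Y)) : Nonempty (prism i₀ {a} t ≃ₜ ({i // i ≠ i₀} → Y)) := by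
  obtain ⟨e⟩ := nonempty_homeomorph_prism i₀ {a} t
  obtain ⟨f⟩ := h
  exact ⟨e.trans <| (Homeomorph.uniqueProd _ _).trans (Homeomorph.piCongrRight fun _ => f)⟩

end Prism

/-- For `ψ` homeomorphism invariant, finitely additive, with
`ψ((0,1] × (0,1)^n) = 0` for all `n ≥ 0`, one has `ψ(ℝ^n) = (-1)^n ψ({pt})`,
where `ψ(ℝ^n)` means `ψ` evaluated on any set homeomorphic to `ℝ^n`
(and the point is `ℝ^0`). -/
theorem stmt4 (ψ : (n : ℕ) → Set (Fin n → ℝ) → ℝ)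
    (hinv : ∀ (m n : ℕ) (A : Set (Fin m → ℝ)) (B : Set (Fin n → ℝ)),
      Nonempty (↥A ≃ₜ ↥B) → ψ m A = ψ n B)
    (hadd : ∀ (n : ℕ) (A B : Set (Fin n → ℝ)),
      Disjoint A B → ψ n (A ∪ B) = ψ n A + ψ n B)
    (hzero : ∀ n : ℕ,
      ψ (n + 1) {x : Fin (n + 1) → ℝ |
        x 0 ∈ Set.Ioc (0 : ℝ) 1 ∧ ∀ i : Fin (n + 1), i ≠ 0 → x i ∈ Set.Ioo (0 : ℝ) 1} = 0) :
    ∀ (m n : ℕ) (A : Set (Fin m → ℝ)), Nonempty (↥A ≃ₜ (Fin n → ℝ)) →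
      ψ m A = (-1 : ℝ) ^ n * ψ 0 Set.univ := by
  have hψ : ∀ m n (A : Set (Fin m → ℝ)), Nonempty (A ≃ₜ (Fin n → ℝ)) → ψ m A = ψ n univ :=
    fun m n A ⟨e⟩ => hinv m n A univ ⟨e.trans (Homeomorph.Set.univ _).symm⟩
  have hψ_univ : ∀ n, ψ n univ = (-1 : ℝ) ^ n * ψ 0 univ := by
    intro n
    induction n with
    | zero => simp
    | succ n ih =>
      have hslab : ψ (n + 1) (prism 0 (Ioo 0 1 ∪ {1}) (Ioo 0 1)) = 0 := by
        rw [Ioo_union_right one_pos]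
        exact hzero n
      have hdisj : Disjoint (Ioo (0 : ℝ) 1) {1} := disjoint_singleton_right.2 right_notMem_Ioo
      have hcube :=
        nonempty_homeomorph_prism_self (0 : Fin (n + 1)) nonempty_homeomorph_Ioo_zero_one
      obtain ⟨e⟩ := nonempty_homeomorph_prism_singleton (0 : Fin (n + 1)) (1 : ℝ)
        nonempty_homeomorph_Ioo_zero_one
      have hface : Nonempty (prism (0 : Fin (n + 1)) {1} (Ioo (0 : ℝ) 1) ≃ₜ (Fin n → ℝ)) :=
        ⟨e.trans (Homeomorph.piCongrLeft (finSuccAboveEquiv 0)).symm⟩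
      rw [prism_union, hadd _ _ _ (disjoint_prism hdisj 0 _), hψ _ _ _ hcube, hψ _ _ _ hface,
        ih] at hslab
      rw [pow_succ]
      linarith
  exact fun m n A h => (hψ m n A h).trans (hψ_univ n)
end

section
/- Let f : ℝⁿ → ℝ be affine on a simplex [a₀,...,a_d] with f(aᵢ) = 0 for i = 0,...,k and f(aᵢ) > δ for i = k+1,...,d, where δ > 0. Then for any point y in the simplex with 0 < f(y) = t₀ ≤ δ, there exists a unique point x in the simplex with f(x) = δ such that y lies on the segment from q(x) to x, where q(x) is the radial projection onto the face [a₀,...,a_k] defined by normalizing the first k+1 barycentric coordinates. Explicitly, the barycentric coordinates λ of x are uniquely determined by the linear system λ + ((δ-t₀)/δ)·(λ₀/α - λ₀, ..., λ_k/α - λ_k, -λ_{k+1}, ..., -λ_d) = r, where r are the barycentric coordinates of y and α = Σ_{i≤k} λᵢ. -/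
/-!
Write `y = ∑ rᵢ aᵢ`. Because `f` vanishes on the face, `f((1 - s) q(x) + s x) = s f(x)`, so
`f(x) = δ` forces `s = f(y) / δ`. The point `(1 - s) q(x) + s x` has barycentric coordinates
`λᵢ ((1 - s) / α + s)` on the face and `s λᵢ` off it; its face mass is `1 - s + s α`, which must
equal `∑_{i ≤ k} rᵢ`, so `α` and then `λ` are determined by `r`. Conversely these formulas give
admissible coordinates: `α > 0` because `f(aᵢ) > δ` off the face gives
`δ ∑_{i > k} rᵢ < f(y) = s δ`. Affine independence lets us compare points through their
barycentric coordinates, so everything reduces to this computation with weights.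
-/

open Finset

section Weights

variable {𝕜 ι : Type*} [Field 𝕜] (p : ι → Prop) [DecidablePred p]

def radialScale (α s : 𝕜) (i : ι) : 𝕜 := (if p i then (1 - s) / α else 0) + s

variable {p} in
lemma radialScale_pos {α s : 𝕜} [LinearOrder 𝕜] [IsStrictOrderedRing 𝕜] (hα : 0 < α)
    (hs : s ∈ Set.Ioc 0 1) (i : ι) : 0 < radialScale p α s i := by
  unfold radialScale
  split_ifs
  · exact add_pos_of_nonneg_of_pos (div_nonneg (sub_nonneg.2 hs.2) hα.le) hs.1
  · simpa using hs.1

variable [Fintype ι]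

/-- If `lam` are the barycentric coordinates of `x` and `q(x) = ∑_{p i} (lamᵢ / α) aᵢ` with
`α = ∑_{p i} lamᵢ`, these are the barycentric coordinates of `(1 - s) q(x) + s x`. -/
def radialWeights (lam : ι → 𝕜) (s : 𝕜) (i : ι) : 𝕜 :=
  lam i * radialScale p (∑ j ∈ univ.filter p, lam j) s i

variable {p}

lemma sum_radialWeights_smul {V : Type*} [AddCommGroup V] [Module 𝕜 V] (lam : ι → 𝕜) (s : 𝕜)
    (v : ι → V) :
    ∑ i, radialWeights p lam s i • v i =
      (1 - s) • ∑ i ∈ univ.filter p, (lam i / ∑ j ∈ univ.filter p, lam j) • v i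
        + s • ∑ i, lam i • v i := by
  simp only [radialWeights, radialScale, mul_add, add_smul, sum_add_distrib, mul_ite, mul_zero,
    ite_smul, zero_smul, sum_ite, sum_const_zero, add_zero, smul_sum, smul_smul]
  congr 1 <;> refine sum_congr rfl fun i _ => by ring_nf

lemma sum_radialWeights (lam : ι → 𝕜) (s : 𝕜) (hα : ∑ i ∈ univ.filter p, lam i ≠ 0) :
    ∑ i, radialWeights p lam s i = 1 - s + s * ∑ i, lam i := by
  have h := sum_radialWeights_smul (p := p) lam s fun _ => (1 : 𝕜)
  simp only [smul_eq_mul, mul_one, ← sum_div, div_self hα] at h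
  exact h

lemma sum_filter_radialWeights (lam : ι → 𝕜) (s : 𝕜) (hα : ∑ i ∈ univ.filter p, lam i ≠ 0) :
    ∑ i ∈ univ.filter p, radialWeights p lam s i = 1 - s + s * ∑ i ∈ univ.filter p, lam i := by
  have h (i) (hi : i ∈ univ.filter p) : radialWeights p lam s i =
      lam i * ((1 - s) / ∑ j ∈ univ.filter p, lam j + s) := by
    simp [radialWeights, radialScale, (mem_filter.1 hi).2]
  rw [sum_congr rfl h, ← sum_mul]
  field_simp

lemma sum_radialWeights_mul {c : ι → 𝕜} (hc : ∀ i, p i → c i = 0) (lam : ι → 𝕜) (s : 𝕜) :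
    ∑ i, radialWeights p lam s i * c i = s * ∑ i, lam i * c i := by
  rw [mul_sum]
  refine sum_congr rfl fun i _ => ?_
  by_cases hi : p i
  · simp [hc i hi]
  · simp only [radialWeights, radialScale, hi, ↓reduceIte, zero_add]
    ring

end Weights

section Ordered

variable {𝕜 ι : Type*} [Field 𝕜] [LinearOrder 𝕜] [IsStrictOrderedRing 𝕜] [Fintype ι]
  {p : ι → Prop} [DecidablePred p] {c : ι → 𝕜} {δ : 𝕜}

lemma mul_sum_filter_not_lt_sum_mul (hc0 : ∀ i, p i → c i = 0) (hc1 : ∀ i, ¬ p i → δ < c i)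
    {w : ι → 𝕜} (hw : ∀ i, 0 ≤ w i) (hpos : 0 < ∑ i, w i * c i) :
    δ * ∑ i ∈ univ.filter (¬ p ·), w i < ∑ i, w i * c i := by
  have hsum : ∑ i ∈ univ.filter (¬ p ·), w i * c i = ∑ i, w i * c i :=
    sum_filter_of_ne fun i _ h hp => h (by simp [hc0 i hp])
  obtain ⟨i, -, hi⟩ := exists_lt_of_sum_lt (s := univ) (f := fun _ => (0 : 𝕜)) (by simpa using hpos)
  have hpi : ¬ p i := fun hp => by simp [hc0 i hp] at hi
  have hwi : 0 < w i := (hw i).lt_of_ne fun h => by simp [← h] at hi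
  rw [← hsum, mul_sum]
  refine sum_lt_sum (fun j hj => ?_) ⟨i, by simpa using hpi, ?_⟩
  · rw [mul_comm]
    exact mul_le_mul_of_nonneg_left (hc1 j (mem_filter.1 hj).2).le (hw j)
  · rw [mul_comm]
    exact mul_lt_mul_of_pos_left (hc1 i hpi) hwi

lemma sum_filter_pos_of_sum_mul_eq (hc0 : ∀ i, p i → c i = 0) (hc1 : ∀ i, ¬ p i → δ < c i)
    (hδ : 0 < δ) {w : ι → 𝕜} (hw : ∀ i, 0 ≤ w i) (hw1 : ∑ i, w i = 1)
    (hwc : ∑ i, w i * c i = δ) : 0 < ∑ i ∈ univ.filter p, w i := by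
  have h := mul_sum_filter_not_lt_sum_mul hc0 hc1 hw (hwc ▸ hδ)
  rw [hwc, mul_lt_iff_lt_one_right hδ] at h
  have hsplit := sum_filter_add_sum_filter_not univ p w
  linarith

lemma exists_radialWeights_eq (hc0 : ∀ i, p i → c i = 0) (hc1 : ∀ i, ¬ p i → δ < c i)
    (hδ : 0 < δ) {r : ι → 𝕜} (hr0 : ∀ i, 0 ≤ r i) (hr1 : ∑ i, r i = 1)
    (ht0 : 0 < ∑ i, r i * c i) (htδ : ∑ i, r i * c i ≤ δ) :
    ∃ lam : ι → 𝕜, (∀ i, 0 ≤ lam i) ∧ ∑ i, lam i = 1 ∧ ∑ i, lam i * c i = δ ∧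
      ∃ s ∈ Set.Icc (0 : 𝕜) 1, r = radialWeights p lam s := by
  generalize ht : ∑ i, r i * c i = t at ht0 htδ
  generalize hR : ∑ i ∈ univ.filter p, r i = R
  set s := t / δ
  have hs : s ∈ Set.Ioc 0 1 := ⟨div_pos ht0 hδ, (div_le_one hδ).2 htδ⟩
  have hts : t = s * δ := (div_mul_cancel₀ t hδ.ne').symm
  have hRs : 1 - s < R := by
    have h := mul_sum_filter_not_lt_sum_mul hc0 hc1 hr0 (ht ▸ ht0)
    have hsplit := sum_filter_add_sum_filter_not univ p r
    rw [ht, hts, mul_comm s, mul_lt_mul_iff_right₀ hδ] at h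
    linarith
  set α := (R - (1 - s)) / s
  have hα : 0 < α := div_pos (by linarith) hs.1
  have hRα : R = 1 - s + s * α := by
    simp only [α]
    field_simp [hs.1.ne']
    ring
  set lam := fun i => r i / radialScale p α s i
  have hface : ∑ i ∈ univ.filter p, lam i = α := by
    have h (i) (hi : i ∈ univ.filter p) : lam i = r i / ((1 - s) / α + s) := by
      simp [lam, radialScale, (mem_filter.1 hi).2]
    rw [sum_congr rfl h, ← sum_div, hR, hRα]
    field_simp
    exact div_self (hRα ▸ (by linarith [hs.2] : 0 < R).ne')
  have hr : r = radialWeights p lam s := by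
    funext i
    simp only [radialWeights, hface, lam]
    rw [div_mul_cancel₀ _ (radialScale_pos hα hs i).ne']
  refine ⟨lam, fun i => div_nonneg (hr0 i) (radialScale_pos hα hs i).le, ?_, ?_,
    s, ⟨hs.1.le, hs.2⟩, hr⟩
  · have h := sum_radialWeights (p := p) lam s (hface ▸ hα.ne')
    rw [← hr, hr1] at h
    exact mul_left_cancel₀ hs.1.ne' (by linarith)
  · have h := sum_radialWeights_mul hc0 lam s
    rw [← hr, ht, hts] at h
    exact (mul_left_cancel₀ hs.1.ne' h).symm

lemma eq_of_radialWeights_eq (hc0 : ∀ i, p i → c i = 0) {lam lam' : ι → 𝕜} {s s' : 𝕜}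
    (hα : 0 < ∑ i ∈ univ.filter p, lam i) (hα' : 0 < ∑ i ∈ univ.filter p, lam' i)
    (hs : s ∈ Set.Ioc 0 1) (hc : ∑ i, lam i * c i = ∑ i, lam' i * c i)
    (hne : ∑ i, lam i * c i ≠ 0) (h : radialWeights p lam s = radialWeights p lam' s') :
    lam = lam' := by
  have hss' : s = s' := by
    have := sum_radialWeights_mul hc0 lam s
    rw [h, sum_radialWeights_mul hc0, ← hc] at this
    exact (mul_right_cancel₀ hne this).symm
  subst hss'
  have hαα' : ∑ i ∈ univ.filter p, lam i = ∑ i ∈ univ.filter p, lam' i := by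
    have := sum_filter_radialWeights lam s hα.ne'
    rw [h, sum_filter_radialWeights lam' s hα'.ne'] at this
    exact mul_left_cancel₀ hs.1.ne' (by linarith)
  funext i
  have hi := congrFun h i
  simp only [radialWeights, hαα'] at hi
  exact mul_right_cancel₀ (radialScale_pos hα' hs i).ne' hi

theorem existsUnique_radialWeights_eq (hc0 : ∀ i, p i → c i = 0)
    (hc1 : ∀ i, ¬ p i → δ < c i) (hδ : 0 < δ) {r : ι → 𝕜} (hr0 : ∀ i, 0 ≤ r i)
    (hr1 : ∑ i, r i = 1) (ht0 : 0 < ∑ i, r i * c i) (htδ : ∑ i, r i * c i ≤ δ) :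
    ∃! lam : ι → 𝕜, (∀ i, 0 ≤ lam i) ∧ ∑ i, lam i = 1 ∧ ∑ i, lam i * c i = δ ∧
      ∃ s ∈ Set.Icc (0 : 𝕜) 1, r = radialWeights p lam s := by
  obtain ⟨lam, ⟨h0, h1, hc, s, hs, rfl⟩⟩ := exists_radialWeights_eq hc0 hc1 hδ hr0 hr1 ht0 htδ
  refine ⟨lam, ⟨h0, h1, hc, s, hs, rfl⟩, ?_⟩
  rintro lam' ⟨h0', h1', hc', s', -, hr⟩
  rw [sum_radialWeights_mul hc0, hc] at ht0
  refine (eq_of_radialWeights_eq hc0 (sum_filter_pos_of_sum_mul_eq hc0 hc1 hδ h0 h1 hc)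
    (sum_filter_pos_of_sum_mul_eq hc0 hc1 hδ h0' h1' hc') ⟨pos_of_mul_pos_left ht0 hδ.le, hs.2⟩
    (hc.trans hc'.symm) (hc ▸ hδ.ne') hr).symm

end Ordered

lemma AffineMap.apply_sum_smul_of_sum_eq_one {𝕜 ι V V' : Type*} [Ring 𝕜] [Fintype ι]
    [AddCommGroup V] [Module 𝕜 V] [AddCommGroup V'] [Module 𝕜 V'] (f : V →ᵃ[𝕜] V')
    {w : ι → 𝕜} (hw : ∑ i, w i = 1) (v : ι → V) :
    f (∑ i, w i • v i) = ∑ i, w i • f (v i) := by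
  rw [← univ.affineCombination_eq_linear_combination v w hw, univ.map_affineCombination v w hw f,
    univ.affineCombination_eq_linear_combination _ w hw]
  rfl

lemma exists_weights_of_mem_convexHull_range {𝕜 ι E : Type*} [Field 𝕜] [LinearOrder 𝕜]
    [IsStrictOrderedRing 𝕜] [Fintype ι] [AddCommGroup E] [Module 𝕜 E] {v : ι → E} {x : E}
    (hx : x ∈ convexHull 𝕜 (Set.range v)) :
    ∃ w : ι → 𝕜, (∀ i, 0 ≤ w i) ∧ ∑ i, w i = 1 ∧ ∑ i, w i • v i = x := by
  rw [convexHull_range_eq_exists_affineCombination] at hx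
  obtain ⟨s, w, hw0, hw1, rfl⟩ := hx
  have hw1' : ∑ i, Set.indicator s w i = 1 := by
    rwa [sum_indicator_subset _ (subset_univ s)]
  refine ⟨Set.indicator s w, fun i => Set.indicator_nonneg hw0 i, hw1', ?_⟩
  rw [affineCombination_indicator_subset w v (subset_univ s),
    univ.affineCombination_eq_linear_combination v _ hw1']

theorem stmt17_general {n d : ℕ} (a : Fin (d + 1) → (Fin n → ℝ)) (ha : AffineIndependent ℝ a)
    (k : ℕ) (f : (Fin n → ℝ) →ᵃ[ℝ] ℝ) (δ : ℝ) (hδ : 0 < δ)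
    (hf0 : ∀ i : Fin (d + 1), (i : ℕ) ≤ k → f (a i) = 0)
    (hf1 : ∀ i : Fin (d + 1), k < (i : ℕ) → δ < f (a i))
    (y : Fin n → ℝ) (hy : y ∈ convexHull ℝ (Set.range a))
    (hy0 : 0 < f y) (hyδ : f y ≤ δ) :
    ∃! lam : Fin (d + 1) → ℝ,
      (∀ i, 0 ≤ lam i) ∧ (∑ i, lam i = 1) ∧
      f (∑ i, lam i • a i) = δ ∧
      ∃ s ∈ Set.Icc (0 : ℝ) 1,
        y = (1 - s) • (∑ i ∈ univ.filter (fun i : Fin (d + 1) => (i : ℕ) ≤ k),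
              (lam i / ∑ j ∈ univ.filter (fun j : Fin (d + 1) => (j : ℕ) ≤ k), lam j) • a i)
            + s • (∑ i, lam i • a i) := by
  obtain ⟨r, hr0, hr1, rfl⟩ := exists_weights_of_mem_convexHull_range hy
  have hf (w : Fin (d + 1) → ℝ) (hw : ∑ i, w i = 1) : f (∑ i, w i • a i) = ∑ i, w i * f (a i) :=
    f.apply_sum_smul_of_sum_eq_one hw a
  have hf1' (i : Fin (d + 1)) (hi : ¬ (i : ℕ) ≤ k) : δ < f (a i) := hf1 i (not_le.1 hi)
  rw [hf r hr1] at hy0 hyδ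
  refine (existsUnique_congr fun lam => ?_).2
    (existsUnique_radialWeights_eq hf0 hf1' hδ hr0 hr1 hy0 hyδ)
  refine and_congr_right fun h0 => and_congr_right fun h1 => ?_
  rw [hf lam h1]
  refine and_congr_right fun hc => exists_congr fun s => and_congr_right fun _ => ?_
  have hα := sum_filter_pos_of_sum_mul_eq hf0 hf1' hδ h0 h1 hc
  have hsum : ∑ i, r i = ∑ i, radialWeights (fun i : Fin (d + 1) => (i : ℕ) ≤ k) lam s i := by
    rw [hr1, sum_radialWeights lam s hα.ne', h1]
    ring
  rw [← sum_radialWeights_smul]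
  exact ⟨fun h => funext fun i => ha.eq_of_sum_eq_sum hsum h i (mem_univ i), fun h => h ▸ rfl⟩

/-- Let `f` be affine on the simplex `[a₀,...,a_d]` with `f(aᵢ) = 0` for `i ≤ k`
and `f(aᵢ) > δ` for `i > k`, where `δ > 0`. For any point `y` of the simplex with
`0 < f(y) ≤ δ` there is a unique convex combination `x = ∑ λᵢ aᵢ` (i.e. unique
barycentric coordinates `λ`) with `f(x) = δ` such that `y` lies on the segment
from `q(x) = ∑_{i≤k} (λᵢ/α) aᵢ` (where `α = ∑_{i≤k} λᵢ`) to `x`. -/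
theorem stmt17 {n d : ℕ} (a : Fin (d + 1) → (Fin n → ℝ)) (ha : AffineIndependent ℝ a)
    (k : ℕ) (hk : k < d) (f : (Fin n → ℝ) →ᵃ[ℝ] ℝ) (δ : ℝ) (hδ : 0 < δ)
    (hf0 : ∀ i : Fin (d + 1), (i : ℕ) ≤ k → f (a i) = 0)
    (hf1 : ∀ i : Fin (d + 1), k < (i : ℕ) → δ < f (a i))
    (y : Fin n → ℝ) (hy : y ∈ convexHull ℝ (Set.range a))
    (hy0 : 0 < f y) (hyδ : f y ≤ δ) :
    ∃! lam : Fin (d + 1) → ℝ,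
      (∀ i, 0 ≤ lam i) ∧ (∑ i, lam i = 1) ∧
      f (∑ i, lam i • a i) = δ ∧
      ∃ s ∈ Set.Icc (0 : ℝ) 1,
        y = (1 - s) • (∑ i ∈ univ.filter (fun i : Fin (d + 1) => (i : ℕ) ≤ k),
              (lam i / ∑ j ∈ univ.filter (fun j : Fin (d + 1) => (j : ℕ) ≤ k), lam j) • a i)
            + s • (∑ i, lam i • a i) :=
  stmt17_general a ha k f δ hδ hf0 hf1 y hy hy0 hyδ
end
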